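/- arXiv:1210.2464 — 4 statements merged into one kernel-verified Lean document; each statement's English description precedes it below -/
import Mathlib

section
/- The set of real r×q matrices having at least one repeated singular value has Lebesgue measure zero in ℝ^{r×q}. -/
open MeasureTheory Matrix Polynomial

noncomputable instance (m n : ℕ) : MeasureSpace (Matrix (Fin m) (Fin n) ℝ) :=
  inferInstanceAs (MeasureSpace (Fin m → Fin n → ℝ))

lemma mvpoly_zero_set_null : ∀ (n : ℕ) (p : MvPolynomial (Fin n) ℝ), p ≠ 0 →
    volume {x : Fin n → ℝ | MvPolynomial.eval x p = 0} = 0 := by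
  intro n
  induction n with
  | zero =>
    intro p hp
    obtain ⟨c, rfl⟩ := MvPolynomial.C_surjective (Fin 0) p
    have hc : c ≠ 0 := fun h => hp (by simp [h])
    have : {x : Fin 0 → ℝ | MvPolynomial.eval x (MvPolynomial.C c) = 0} = ∅ := by
      ext x; simp [hc]
    rw [this]; simp
  | succ n ih =>
    intro p hp
    set p' : Polynomial (MvPolynomial (Fin n) ℝ) := MvPolynomial.finSuccEquiv ℝ n p with hp'def
    have hp' : p' ≠ 0 := by
      simp only [hp'def]
      exact (map_ne_zero_iff _ (AlgEquiv.injective _)).mpr hp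
    set Q : ℝ → MvPolynomial (Fin n) ℝ := fun a => Polynomial.eval (MvPolynomial.C a) p' with hQ
    have keyQ : ∀ (a : ℝ) (y : Fin n → ℝ),
        MvPolynomial.eval (Fin.cons a y) p = MvPolynomial.eval y (Q a) := by
      intro a y
      rw [MvPolynomial.eval_eq_eval_mv_eval', Polynomial.eval_map, hQ]
      beta_reduce
      rw [← Polynomial.eval₂_id, Polynomial.hom_eval₂]
      simp [hp'def]
    -- the bad set of a's is finite
    have hSfin : Set.Finite {a : ℝ | Q a = 0} := by
      have h1 : Set.Finite {z : MvPolynomial (Fin n) ℝ | Polynomial.IsRoot p' z} :=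
        Polynomial.finite_setOf_isRoot hp'
      have h2 : {a : ℝ | Q a = 0} ⊆ MvPolynomial.C ⁻¹' {z | Polynomial.IsRoot p' z} := by
        intro a ha; exact ha
      exact Set.Finite.subset (Set.Finite.preimage (MvPolynomial.C_injective _ ℝ).injOn h1) h2
    -- continuity hence measurability of the slice set
    have hcont : Continuous fun z : ℝ × (Fin n → ℝ) => MvPolynomial.eval (Fin.cons z.1 z.2) p := by
      refine (MvPolynomial.continuous_eval p).comp ?_
      apply continuous_pi
      intro i
      refine Fin.cases ?_ ?_ i
      · exact continuous_fst.congr (fun z => by simp)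
      · intro j
        exact ((continuous_apply j).comp continuous_snd).congr (fun z => by simp)
    set t : Set (ℝ × (Fin n → ℝ)) := {z | MvPolynomial.eval (Fin.cons z.1 z.2) p = 0} with ht
    have htm : MeasurableSet t := (isClosed_singleton.preimage hcont).measurableSet
    -- Fubini
    have hprod : (volume : Measure (ℝ × (Fin n → ℝ))) t = 0 := by
      rw [show (volume : Measure (ℝ × (Fin n → ℝ))) = (volume : Measure ℝ).prod volume from rfl]
      rw [Measure.measure_prod_null htm]
      have hae : ∀ᵐ a : ℝ, a ∉ {a : ℝ | Q a = 0} := by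
        rw [ae_iff]
        simpa using hSfin.countable.measure_zero volume
      rw [Filter.EventuallyEq]
      filter_upwards [hae] with a haS
      have hQa : Q a ≠ 0 := haS
      have : Prod.mk a ⁻¹' t = {y : Fin n → ℝ | MvPolynomial.eval y (Q a) = 0} := by
        ext y; simp [ht, keyQ]
      rw [this]
      exact ih (Q a) hQa
    -- transfer along the measurable equiv
    have e := MeasureTheory.volume_preserving_piFinSuccAbove (fun _ : Fin (n+1) => ℝ) 0
    have hpre : (MeasurableEquiv.piFinSuccAbove (fun _ : Fin (n+1) => ℝ) 0) ⁻¹' t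
        = {x : Fin (n+1) → ℝ | MvPolynomial.eval x p = 0} := by
      ext x
      simp only [Set.mem_preimage, ht, Set.mem_setOf_eq]
      have : Fin.cons (x 0) (fun j => x ((0 : Fin (n+1)).succAbove j)) = x := by
        funext i
        refine Fin.cases ?_ ?_ i
        · simp
        · intro j; simp [Fin.zero_succAbove]
      rw [show (MeasurableEquiv.piFinSuccAbove (fun _ : Fin (n+1) => ℝ) 0) x
          = (x 0, fun j => x ((0 : Fin (n+1)).succAbove j)) from rfl]
      simp only []
      rw [this]
    rw [← hpre]
    rw [e.measure_preimage htm.nullMeasurableSet]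
    exact hprod

lemma mvpoly_zero_set_null_prod (r q : ℕ) (p : MvPolynomial (Fin r × Fin q) ℝ) (hp : p ≠ 0) :
    volume {y : Fin r × Fin q → ℝ | MvPolynomial.eval y p = 0} = 0 := by
  classical
  set f : Fin (r * q) ≃ (Fin r × Fin q) := finProdFinEquiv.symm
  set p' : MvPolynomial (Fin (r * q)) ℝ := MvPolynomial.rename f.symm p with hp'def
  have hp' : p' ≠ 0 := by
    intro h
    exact hp <| (MvPolynomial.rename_injective _ f.symm.injective) (by simpa [hp'def] using h)
  have e := MeasureTheory.volume_measurePreserving_piCongrLeft (fun _ : Fin r × Fin q => ℝ) f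
  set t : Set (Fin r × Fin q → ℝ) := {y | MvPolynomial.eval y p = 0} with ht
  have htm : MeasurableSet t :=
    (isClosed_singleton.preimage (MvPolynomial.continuous_eval p)).measurableSet
  have hpre : (MeasurableEquiv.piCongrLeft (fun _ : Fin r × Fin q => ℝ) f) ⁻¹' t
      = {x : Fin (r * q) → ℝ | MvPolynomial.eval x p' = 0} := by
    ext x
    simp only [Set.mem_preimage, ht, Set.mem_setOf_eq, hp'def, MvPolynomial.eval_rename]
    have : ((MeasurableEquiv.piCongrLeft (fun _ : Fin r × Fin q => ℝ) f) x : Fin r × Fin q → ℝ) = x ∘ f.symm := by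
      funext i
      show (Equiv.piCongrLeft (fun _ : Fin r × Fin q => ℝ) f) x i = x (f.symm i)
      conv_lhs => rw [← Equiv.apply_symm_apply f i]
      exact Equiv.piCongrLeft_apply_apply (fun _ : Fin r × Fin q => ℝ) f x (f.symm i)
    rw [this]
  have := e.measure_preimage htm.nullMeasurableSet
  rw [hpre] at this
  rw [← this]
  exact mvpoly_zero_set_null _ p' hp'

lemma matrix_poly_zero_set_null (r q : ℕ) (p : MvPolynomial (Fin r × Fin q) ℝ) (hp : p ≠ 0) :
    volume {A : Matrix (Fin r) (Fin q) ℝ | MvPolynomial.eval (fun ij => A ij.1 ij.2) p = 0} = 0 := by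
  classical
  set g : Matrix (Fin r) (Fin q) ℝ → (Fin r × Fin q → ℝ) := fun A ij => A ij.1 ij.2 with hg
  have hgm : Measurable g :=
    measurable_pi_lambda _ fun ij => (measurable_pi_apply ij.2).comp (measurable_pi_apply ij.1)
  have hmp : MeasurePreserving g volume volume := by
    refine ⟨hgm, ?_⟩
    rw [show (volume : Measure (Fin r × Fin q → ℝ)) = Measure.pi (fun _ => volume) from volume_pi]
    refine (Measure.pi_eq (μ := fun _ : Fin r × Fin q => (volume : Measure ℝ)) ?_).symm
    intro s hs
    rw [Measure.map_apply hgm (MeasurableSet.univ_pi hs)]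
    have : g ⁻¹' (Set.univ.pi s) = Set.univ.pi (fun i => Set.univ.pi fun j => s (i, j)) := by
      ext A
      simp only [Set.mem_preimage]
      constructor
      · intro h i _ j _; exact h (i, j) (Set.mem_univ _)
      · intro h ij _; exact h ij.1 (Set.mem_univ _) ij.2 (Set.mem_univ _)
    rw [this]
    show (volume : Measure (Fin r → Fin q → ℝ)) (Set.univ.pi fun i => Set.univ.pi fun j => s (i, j)) = _
    rw [volume_pi_pi]
    rw [Fintype.prod_prod_type]
    exact Finset.prod_congr rfl fun i _ => volume_pi_pi _
  have htm : MeasurableSet {y : Fin r × Fin q → ℝ | MvPolynomial.eval y p = 0} :=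
    (isClosed_singleton.preimage (MvPolynomial.continuous_eval p)).measurableSet
  have := hmp.measure_preimage htm.nullMeasurableSet
  rw [show g ⁻¹' {y : Fin r × Fin q → ℝ | MvPolynomial.eval y p = 0}
      = {A : Matrix (Fin r) (Fin q) ℝ | MvPolynomial.eval (fun ij => A ij.1 ij.2) p = 0} from rfl] at this
  rw [this]
  exact mvpoly_zero_set_null_prod r q p hp

noncomputable def genG (r q : ℕ) : Matrix (Fin r) (Fin q) (MvPolynomial (Fin r × Fin q) ℝ) :=
  Matrix.of fun i j => MvPolynomial.X (i, j)

noncomputable def svPoly (r q : ℕ) : MvPolynomial (Fin r × Fin q) ℝ :=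
  Matrix.det (Matrix.of fun j k : Fin q =>
    Matrix.trace (((genG r q)ᵀ * genG r q) ^ ((j : ℕ) + (k : ℕ))))

noncomputable def svFun {r q : ℕ} (A : Matrix (Fin r) (Fin q) ℝ) : ℝ :=
  Matrix.det (Matrix.of fun j k : Fin q => Matrix.trace ((Aᵀ * A) ^ ((j : ℕ) + (k : ℕ))))

lemma eval_svPoly {r q : ℕ} (A : Matrix (Fin r) (Fin q) ℝ) :
    MvPolynomial.eval (fun ij => A ij.1 ij.2) (svPoly r q) = svFun A := by
  classical
  set φ : MvPolynomial (Fin r × Fin q) ℝ →+* ℝ :=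
    (MvPolynomial.eval fun ij : Fin r × Fin q => A ij.1 ij.2) with hφ
  set G : Matrix (Fin r) (Fin q) (MvPolynomial (Fin r × Fin q) ℝ) := genG r q with hG
  have hGmap : G.map φ = A := by
    ext i j; simp [hG, hφ, genG]
  show φ _ = _
  rw [svPoly, svFun, RingHom.map_det]
  congr 1
  ext j k
  rw [RingHom.mapMatrix_apply]
  simp only [Matrix.map_apply, Matrix.of_apply]
  rw [AddMonoidHom.map_trace φ]
  have hcoe : ((φ : MvPolynomial (Fin r × Fin q) ℝ →+ ℝ).mapMatrix
      ((((genG r q)ᵀ * genG r q) ^ ((j : ℕ) + (k : ℕ)))))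
      = (((genG r q)ᵀ * genG r q) ^ ((j : ℕ) + (k : ℕ))).map φ := rfl
  congr 1
  show ((Gᵀ * G) ^ ((j : ℕ) + (k : ℕ))).map φ = (Aᵀ * A) ^ ((j : ℕ) + (k : ℕ))
  have : ((Gᵀ * G) ^ ((j : ℕ) + (k : ℕ))).map φ
      = ((Gᵀ * G).map φ) ^ ((j : ℕ) + (k : ℕ)) := by
    rw [← RingHom.mapMatrix_apply, ← RingHom.mapMatrix_apply, map_pow]
  rw [this, Matrix.map_mul, Matrix.transpose_map, hGmap]

lemma exists_svFun_ne_zero (r q : ℕ) (hrq : q ≤ r) :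
    ∃ A : Matrix (Fin r) (Fin q) ℝ, svFun A ≠ 0 := by
  classical
  set d : Fin q → ℝ := fun j => (j : ℕ) + 1 with hd
  set A : Matrix (Fin r) (Fin q) ℝ :=
    Matrix.of fun i j => if (i : ℕ) = (j : ℕ) then Real.sqrt ((j : ℕ) + 1) else 0 with hA
  refine ⟨A, ?_⟩
  have hAA : Aᵀ * A = diagonal d := by
    ext j k
    simp only [mul_apply, transpose_apply, hA, Matrix.of_apply]
    rcases eq_or_ne j k with rfl | hjk
    · rw [diagonal_apply_eq]
      rw [Finset.sum_eq_single (Fin.castLE hrq j)]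
      · simp only [Fin.coe_castLE, if_pos rfl]
        exact Real.mul_self_sqrt (by positivity)
      · intro i _ hi
        have : (i : ℕ) ≠ (j : ℕ) := by
          intro h; apply hi; apply Fin.ext; simpa using h
        simp [this]
      · intro h; exact absurd (Finset.mem_univ _) h
    · rw [diagonal_apply_ne _ hjk]
      apply Finset.sum_eq_zero
      intro i _
      by_cases h1 : (i : ℕ) = (j : ℕ)
      · by_cases h2 : (i : ℕ) = (k : ℕ)
        · exact absurd (Fin.ext (h1.symm.trans h2)) hjk
        · simp [h2]
      · simp [h1]
  have htr : ∀ m : ℕ, Matrix.trace ((Aᵀ * A) ^ m) = ∑ i, d i ^ m := by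
    intro m
    rw [hAA, diagonal_pow, trace_diagonal]
    simp
  have hM : (Matrix.of fun j k : Fin q => Matrix.trace ((Aᵀ * A) ^ ((j : ℕ) + (k : ℕ))))
      = (vandermonde d)ᵀ * vandermonde d := by
    ext j k
    rw [Matrix.of_apply, htr, mul_apply]
    simp only [transpose_apply, vandermonde_apply]
    exact Finset.sum_congr rfl fun i _ => pow_add (d i) _ _
  have hdinj : Function.Injective d := by
    intro a b hab
    apply Fin.ext
    have : ((a : ℕ) : ℝ) = ((b : ℕ) : ℝ) := by
      simpa [hd] using hab
    exact_mod_cast this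
  rw [svFun, hM, det_mul, det_transpose]
  have := det_vandermonde_ne_zero_iff.mpr hdinj
  exact mul_ne_zero this this

lemma svFun_eq_zero_of_not_nodup {r q : ℕ} (A : Matrix (Fin r) (Fin q) ℝ)
    (h : ¬ (Aᵀ * A).charpoly.roots.Nodup) : svFun A = 0 := by
  classical
  have hS : (Aᵀ * A).IsHermitian := by
    have := isHermitian_conjTranspose_mul_self A
    rwa [conjTranspose_eq_transpose_of_trivial] at this
  set v : Fin q → ℝ := RCLike.ofReal ∘ hS.eigenvalues with hv
  set U : Matrix (Fin q) (Fin q) ℝ := (hS.eigenvectorUnitary : Matrix (Fin q) (Fin q) ℝ) with hU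
  have hU1 : U * star U = 1 := mem_unitaryGroup_iff.mp hS.eigenvectorUnitary.2
  have hU2 : star U * U = 1 := mem_unitaryGroup_iff'.mp hS.eigenvectorUnitary.2
  have hspec : Aᵀ * A = U * diagonal v * star U := hS.spectral_theorem
  have hU2' : ∀ X : Matrix (Fin q) (Fin q) ℝ, star U * (U * X) = X := fun X => by
    rw [← Matrix.mul_assoc, hU2, Matrix.one_mul]
  have hpow : ∀ m : ℕ, (Aᵀ * A) ^ m = U * (diagonal v) ^ m * star U := by
    intro m
    induction m with
    | zero => simpa using hU1.symm
    | succ m ih =>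
      rw [pow_succ, ih, hspec, pow_succ]
      simp only [Matrix.mul_assoc]
      rw [hU2']
  have htrace : ∀ m : ℕ, Matrix.trace ((Aᵀ * A) ^ m) = ∑ i, v i ^ m := by
    intro m
    rw [hpow, trace_mul_cycle, hU2, Matrix.one_mul, diagonal_pow, trace_diagonal]
    simp
  -- the characteristic polynomial is the product of linear factors
  have hconj : charmatrix (U * diagonal v * star U)
      = (U.map C) * charmatrix (diagonal v) * ((star U).map C) := by
    have hmapmul : (U.map (C : ℝ →+* ℝ[X])) * ((star U).map C) = 1 := by
      rw [← Matrix.map_mul, hU1, Matrix.map_one _ (map_zero C) (map_one C)]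
    simp only [charmatrix, RingHom.mapMatrix_apply]
    rw [Matrix.mul_sub, Matrix.sub_mul]
    congr 1
    · rw [← (scalar_commute (X : ℝ[X]) (fun r => Commute.all _ _) (U.map C)).eq,
        Matrix.mul_assoc, hmapmul, Matrix.mul_one]
    · rw [Matrix.map_mul, Matrix.map_mul]
  have hcpd : charmatrix (diagonal v) = diagonal (fun i => (X : ℝ[X]) - C (v i)) := by
    ext i j
    rcases eq_or_ne i j with rfl | hij
    · simp
    · simp [hij]
  have hcp : (Aᵀ * A).charpoly = ∏ i, ((X : ℝ[X]) - C (v i)) := by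
    rw [show (Aᵀ * A).charpoly = (charmatrix (Aᵀ * A)).det from rfl, hspec, hconj, det_mul,
      det_mul]
    have h1 : (U.map (C : ℝ →+* ℝ[X])).det * ((star U).map C).det = 1 := by
      rw [← det_mul, ← Matrix.map_mul, hU1, Matrix.map_one _ (map_zero C) (map_one C), det_one]
    calc (U.map (C : ℝ →+* ℝ[X])).det * (charmatrix (diagonal v)).det * ((star U).map C).det
        = ((U.map (C : ℝ →+* ℝ[X])).det * ((star U).map C).det) * (charmatrix (diagonal v)).det
          := by ring
      _ = (charmatrix (diagonal v)).det := by rw [h1, one_mul]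
      _ = ∏ i, ((X : ℝ[X]) - C (v i)) := by rw [hcpd, det_diagonal]
  have hroots : (Aᵀ * A).charpoly.roots = Multiset.map v Finset.univ.val := by
    rw [hcp]
    have : (∏ i, ((X : ℝ[X]) - C (v i)))
        = (Multiset.map (fun a => (X : ℝ[X]) - C a) (Multiset.map v Finset.univ.val)).prod := by
      rw [Multiset.map_map, Finset.prod_eq_multiset_prod]
      rfl
    rw [this, roots_multiset_prod_X_sub_C]
  have hdup : ∃ i j, i ≠ j ∧ v i = v j := by
    by_contra hcon
    push_neg at hcon
    apply h
    rw [hroots]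
    exact Multiset.Nodup.map_on
      (fun x _ y _ hxy => by_contra fun hne => hcon x y hne hxy) Finset.univ.nodup
  obtain ⟨i, j, hij, hvij⟩ := hdup
  have hM : (Matrix.of fun a b : Fin q => Matrix.trace ((Aᵀ * A) ^ ((a : ℕ) + (b : ℕ))))
      = (vandermonde v)ᵀ * vandermonde v := by
    ext a b
    rw [Matrix.of_apply, htrace, mul_apply]
    simp only [transpose_apply, vandermonde_apply]
    exact Finset.sum_congr rfl fun i _ => pow_add (v i) _ _
  rw [svFun, hM, det_mul, det_transpose, det_vandermonde_eq_zero_iff.mpr ⟨i, j, hvij, hij⟩,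
    zero_mul]

/-- The set of real r×q matrices (r ≥ q) with at least one repeated singular value,
i.e. such that `Aᵀ * A` has a repeated eigenvalue (the multiset of roots of its
characteristic polynomial is not nodup), has Lebesgue measure zero. -/
theorem repeated_singular_value_measure_zero (r q : ℕ) (hrq : q ≤ r) :
    volume {A : Matrix (Fin r) (Fin q) ℝ | ¬ (Aᵀ * A).charpoly.roots.Nodup} = 0 := by
  have hp : svPoly r q ≠ 0 := by
    obtain ⟨A, hA⟩ := exists_svFun_ne_zero r q hrq
    intro h0
    apply hA
    rw [← eval_svPoly A, h0, map_zero]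
  refine measure_mono_null ?_ (matrix_poly_zero_set_null r q (svPoly r q) hp)
  intro A hA
  simp only [Set.mem_setOf_eq] at *
  rw [eval_svPoly]
  exact svFun_eq_zero_of_not_nodup A hA
end

section
/- For distinct positive reals d₁ > d₂ > ⋯ > d_m > 0 and any 1 ≤ r < m, the quantity max(p,q)·r + Σ_{k=1}^{r} Σ_{l=r+1}^{m} (d_k² + d_l²)/(d_k² − d_l²) is at least (p + q − r)·r, whenever m = min(p,q). -/
/-- For distinct positive reals d₁ > d₂ > ⋯ > d_m > 0 and 1 ≤ r < m = min p q, the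
degrees-of-freedom quantity `max p q · r + Σ_{k=1}^r Σ_{l=r+1}^m (d_k²+d_l²)/(d_k²−d_l²)`
is at least the naive count `(p + q − r) · r`. -/
theorem df_ge_naive (p q r m : ℕ) (hm : m = min p q) (hr1 : 1 ≤ r) (hrm : r < m)
    (d : ℕ → ℝ) (hpos : ∀ k ∈ Finset.Icc 1 m, 0 < d k)
    (hanti : ∀ k ∈ Finset.Icc 1 m, ∀ l ∈ Finset.Icc 1 m, k < l → d l < d k) :
    ((p + q - r : ℕ) : ℝ) * r ≤
      (max p q : ℝ) * r +
        ∑ k ∈ Finset.Icc 1 r, ∑ l ∈ Finset.Icc (r + 1) m,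
          (d k ^ 2 + d l ^ 2) / (d k ^ 2 - d l ^ 2) := by
  have hsum : ((r * (m - r) : ℕ) : ℝ) ≤
      ∑ k ∈ Finset.Icc 1 r, ∑ l ∈ Finset.Icc (r + 1) m,
        (d k ^ 2 + d l ^ 2) / (d k ^ 2 - d l ^ 2) := by
    have key : ∀ k ∈ Finset.Icc 1 r, ∀ l ∈ Finset.Icc (r + 1) m,
        (1 : ℝ) ≤ (d k ^ 2 + d l ^ 2) / (d k ^ 2 - d l ^ 2) := by
      intro k hk l hl
      simp only [Finset.mem_Icc] at hk hl
      have hkm : k ∈ Finset.Icc 1 m := Finset.mem_Icc.mpr ⟨hk.1, hk.2.trans hrm.le⟩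
      have hlm : l ∈ Finset.Icc 1 m := Finset.mem_Icc.mpr ⟨le_trans (by omega) hl.1, hl.2⟩
      have hdk := hpos k hkm
      have hdl := hpos l hlm
      have hlt : d l < d k := hanti k hkm l hlm (by omega)
      have hsq : d l ^ 2 < d k ^ 2 := by nlinarith
      rw [le_div_iff₀ (by linarith)]
      nlinarith
    have hcard : ∑ k ∈ Finset.Icc 1 r, ∑ l ∈ Finset.Icc (r + 1) m, (1 : ℝ)
        = ((r * (m - r) : ℕ) : ℝ) := by
      simp [Nat.card_Icc]
    rw [← hcard]
    exact Finset.sum_le_sum fun k hk => Finset.sum_le_sum fun l hl => key k hk l hl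
  have h1 : p + q - r = max p q + (m - r) := by omega
  rw [h1, Nat.cast_add, Nat.cast_max] at *
  rw [Nat.cast_mul] at hsum
  nlinarith [hsum]
end

section
/- If Y ~ N(μ, σ²I_n) and g : ℝⁿ → ℝⁿ is weakly differentiable with E|∂g_i/∂y_i| < ∞, then Cov(g_i(Y), Y_i) = σ² E[∂g_i/∂Y_i] for each i; consequently Σ_i Cov(g_i(Y), Y_i)/σ² = E[div g(Y)] (Stein's identity for degrees of freedom). -/
open MeasureTheory ProbabilityTheory

section SteinAux

open Real

lemma gaussian_density_hasDerivAt (m : ℝ) (v : NNReal) (hv : v ≠ 0) (x : ℝ) :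
    HasDerivAt (gaussianPDFReal m v)
      (-((x - m) / v) * gaussianPDFReal m v x) x := by
  unfold gaussianPDFReal
  have hv' : (v : ℝ) ≠ 0 := by exact_mod_cast hv
  have h1 : HasDerivAt (fun x : ℝ => -(x - m) ^ 2 / (2 * v))
      (-((x - m) / v)) x := by
    have : HasDerivAt (fun x : ℝ => (x - m) ^ 2) (2 * (x - m)) x := by
      simpa using ((hasDerivAt_id x).sub_const m).fun_pow 2
    have := (this.neg).div_const (2 * (v : ℝ))
    refine this.congr_deriv ?_
    field_simp
  have h2 := (h1.exp).const_mul (√(2 * π * v))⁻¹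
  refine h2.congr_deriv ?_
  ring

lemma integral_gaussianReal_eq (m : ℝ) (v : NNReal) (hv : v ≠ 0) (h : ℝ → ℝ) :
    ∫ x, h x ∂(gaussianReal m v) = ∫ x, gaussianPDFReal m v x * h x := by
  rw [gaussianReal_of_var_ne_zero m hv]
  have hm : Measurable fun x => Real.toNNReal (gaussianPDFReal m v x) :=
    (measurable_gaussianPDFReal m v).real_toNNReal
  have : (gaussianPDF m v) = fun x => ((Real.toNNReal (gaussianPDFReal m v x) : NNReal) : ENNReal) := by
    ext x; simp [gaussianPDF, ENNReal.ofReal]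
  rw [this, integral_withDensity_eq_integral_smul hm]
  congr 1 with x
  simp [NNReal.smul_def, Real.coe_toNNReal _ (gaussianPDFReal_nonneg m v x)]

lemma integrable_gaussianReal_iff (m : ℝ) (v : NNReal) (hv : v ≠ 0) (h : ℝ → ℝ) :
    Integrable h (gaussianReal m v) ↔
      Integrable (fun x => gaussianPDFReal m v x * h x) volume := by
  rw [gaussianReal_of_var_ne_zero m hv]
  have hm : Measurable fun x => Real.toNNReal (gaussianPDFReal m v x) :=
    (measurable_gaussianPDFReal m v).real_toNNReal
  have : (gaussianPDF m v) = fun x => ((Real.toNNReal (gaussianPDFReal m v x) : NNReal) : ENNReal) := by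
    ext x; simp [gaussianPDF, ENNReal.ofReal]
  rw [this, integrable_withDensity_iff_integrable_smul hm]
  have heq : ∀ x, (Real.toNNReal (gaussianPDFReal m v x)) • h x = gaussianPDFReal m v x * h x := by
    intro x
    simp [NNReal.smul_def, Real.coe_toNNReal _ (gaussianPDFReal_nonneg m v x)]
  exact integrable_congr (Filter.Eventually.of_forall heq)

lemma stein1 (m : ℝ) (v : NNReal) (hv : v ≠ 0) {f f' : ℝ → ℝ}
    (hd : ∀ x, HasDerivAt f (f' x) x)
    (h1 : Integrable (fun x => f x * x) (gaussianReal m v))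
    (h2 : Integrable f (gaussianReal m v))
    (h3 : Integrable f' (gaussianReal m v)) :
    ∫ x, f x * x ∂(gaussianReal m v) - (∫ x, f x ∂(gaussianReal m v)) * m
      = (v : ℝ) * ∫ x, f' x ∂(gaussianReal m v) := by
  have hv' : (v : ℝ) ≠ 0 := by exact_mod_cast hv
  set φ := gaussianPDFReal m v with hφdef
  have h1' : Integrable (fun x => φ x * (f x * x)) volume :=
    (integrable_gaussianReal_iff m v hv _).mp h1
  have h2' : Integrable (fun x => φ x * f x) volume :=
    (integrable_gaussianReal_iff m v hv _).mp h2
  have h3' : Integrable (fun x => φ x * f' x) volume :=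
    (integrable_gaussianReal_iff m v hv _).mp h3
  set F : ℝ → ℝ := fun x => f x * φ x with hF
  set F' : ℝ → ℝ := fun x => f' x * φ x + f x * (-((x - m) / v) * φ x) with hF'
  have hder : ∀ x, HasDerivAt F (F' x) x := fun x =>
    (hd x).mul (gaussian_density_hasDerivAt m v hv x)
  have hFint : Integrable F volume := h2'.congr
    (Filter.Eventually.of_forall fun x => by simp [F]; ring)
  have hG2 : Integrable (fun x => (v : ℝ)⁻¹ * ((φ x * (f x * x)) - m * (φ x * f x))) volume := by
    refine Integrable.const_mul ?_ _
    exact h1'.sub (h2'.const_mul m)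
  have hF'int : Integrable F' volume := by
    have : F' = fun x => (φ x * f' x) - (v : ℝ)⁻¹ * ((φ x * (f x * x)) - m * (φ x * f x)) := by
      funext x; simp only [F']; field_simp; ring
    rw [this]
    exact h3'.sub hG2
  have hzero : ∫ x, F' x = 0 :=
    integral_eq_zero_of_hasDerivAt_of_integrable hder hF'int hFint
  have hsplit : ∫ x, F' x
      = (∫ x, φ x * f' x) - (∫ x, (v:ℝ)⁻¹ * ((φ x * (f x * x)) - m * (φ x * f x))) := by
    have : F' = fun x => (φ x * f' x) - (v : ℝ)⁻¹ * ((φ x * (f x * x)) - m * (φ x * f x)) := by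
      funext x; simp only [F']; field_simp; ring
    rw [this]
    exact integral_sub h3' hG2
  rw [hsplit] at hzero
  rw [integral_const_mul, integral_sub h1' (h2'.const_mul m), integral_const_mul] at hzero
  have e1 : ∫ x, f x * x ∂(gaussianReal m v) = ∫ x, φ x * (f x * x) :=
    integral_gaussianReal_eq m v hv _
  have e2 : ∫ x, f x ∂(gaussianReal m v) = ∫ x, φ x * f x :=
    integral_gaussianReal_eq m v hv _
  have e3 : ∫ x, f' x ∂(gaussianReal m v) = ∫ x, φ x * f' x :=
    integral_gaussianReal_eq m v hv _
  rw [e1, e2, e3]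
  have := sub_eq_zero.mp hzero
  rw [this]
  field_simp

section coord

variable {k : ℕ}

lemma stein_coord (μ : Fin (k+1) → ℝ) (v : NNReal) (hv : v ≠ 0)
    (g : (Fin (k+1) → ℝ) → (Fin (k+1) → ℝ)) (hg : ContDiff ℝ 1 g)
    (i : Fin (k+1))
    (hint1 : Integrable (fun y => g y i * y i) (Measure.pi fun j => gaussianReal (μ j) v))
    (hint2 : Integrable (fun y => g y i) (Measure.pi fun j => gaussianReal (μ j) v))
    (hint3 : Integrable
      (fun y => fderiv ℝ (fun z => g z i) y (Pi.single i (1 : ℝ)))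
      (Measure.pi fun j => gaussianReal (μ j) v)) :
    ∫ y, g y i * y i ∂(Measure.pi fun j => gaussianReal (μ j) v)
        - (∫ y, g y i ∂(Measure.pi fun j => gaussianReal (μ j) v)) * μ i =
      (v : ℝ) * ∫ y, fderiv ℝ (fun z => g z i) y (Pi.single i (1 : ℝ))
        ∂(Measure.pi fun j => gaussianReal (μ j) v) := by
  set P : Measure (Fin (k+1) → ℝ) := Measure.pi fun j => gaussianReal (μ j) v with hPdef
  set γ : Measure ℝ := gaussianReal (μ i) v with hγdef
  set Q : Measure (Fin k → ℝ) :=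
    Measure.pi fun j => gaussianReal (μ (i.succAbove j)) v with hQdef
  set D : (Fin (k+1) → ℝ) → ℝ :=
    fun y => fderiv ℝ (fun z => g z i) y (Pi.single i (1 : ℝ)) with hDdef
  set e := MeasurableEquiv.piFinSuccAbove (fun _ : Fin (k+1) => ℝ) i with hedef
  have mp : MeasurePreserving e P (γ.prod Q) :=
    measurePreserving_piFinSuccAbove (fun j => gaussianReal (μ j) v) i
  have hesymm : ∀ p : ℝ × (Fin k → ℝ), e.symm p = i.insertNth p.1 p.2 := fun _ => rfl
  -- transfer
  have key : ∀ h : (Fin (k+1) → ℝ) → ℝ, Integrable h P →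
      Integrable (fun p : ℝ × (Fin k → ℝ) => h (i.insertNth p.1 p.2)) (γ.prod Q) ∧
      (∫ y, h y ∂P = ∫ z, ∫ x, h (i.insertNth x z) ∂γ ∂Q) := by
    intro h hh
    have hint : Integrable (fun p : ℝ × (Fin k → ℝ) => h (i.insertNth p.1 p.2)) (γ.prod Q) := by
      have := (MeasurePreserving.symm e mp).integrable_comp_emb e.symm.measurableEmbedding |>.mpr hh
      simpa [Function.comp_def, hesymm] using this
    refine ⟨hint, ?_⟩
    have h1 : ∫ p, h (e.symm p) ∂(γ.prod Q) = ∫ y, h y ∂P :=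
      (MeasurePreserving.symm e mp).integral_comp e.symm.measurableEmbedding h
    rw [← h1]
    exact integral_prod_symm _ hint
  obtain ⟨hI1, hE1⟩ := key _ hint1
  obtain ⟨hI2, hE2⟩ := key _ hint2
  obtain ⟨hI3, hE3⟩ := key _ hint3
  -- simplify the first integrand
  have hI1' : Integrable (fun p : ℝ × (Fin k → ℝ) => g (i.insertNth p.1 p.2) i * p.1) (γ.prod Q) := by
    refine hI1.congr (Filter.Eventually.of_forall fun p => ?_)
    simp [Fin.insertNth_apply_same]
  have hE1' : ∫ y, g y i * y i ∂P = ∫ z, ∫ x, g (i.insertNth x z) i * x ∂γ ∂Q := by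
    rw [hE1]
    congr 1 with z
    congr 1 with x
    simp [Fin.insertNth_apply_same]
  -- derivative fact
  have hderiv : ∀ (z : Fin k → ℝ) (x : ℝ),
      HasDerivAt (fun t => g (i.insertNth t z) i) (D (i.insertNth x z)) x := by
    intro z x
    have hu : HasDerivAt (fun t : ℝ => (i.insertNth t z : Fin (k+1) → ℝ))
        ((Pi.single i (1:ℝ) : Fin (k+1) → ℝ)) x := by
      refine (hasDerivAt_pi (E' := fun _ : Fin (k+1) => ℝ)).mpr ?_
      refine Fin.succAboveCases i ?_ ?_
      · simpa [Fin.insertNth_apply_same] using (hasDerivAt_id' x)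
      · intro j
        simp only [Fin.insertNth_apply_succAbove,
          Pi.single_eq_of_ne (Fin.succAbove_ne i j)]
        exact hasDerivAt_const x _
    have hgi : DifferentiableAt ℝ (fun y => g y i) (i.insertNth x z) :=
      differentiableAt_pi.mp ((hg.differentiable one_ne_zero) _) i
    exact hgi.hasFDerivAt.comp_hasDerivAt x hu
  -- a.e. one-dimensional Stein identity
  have hae : ∀ᵐ z ∂Q,
      (∫ x, g (i.insertNth x z) i * x ∂γ) - (∫ x, g (i.insertNth x z) i ∂γ) * μ i
        = (v : ℝ) * ∫ x, D (i.insertNth x z) ∂γ := by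
    filter_upwards [hI1'.prod_left_ae, hI2.prod_left_ae, hI3.prod_left_ae] with z hz1 hz2 hz3
    exact stein1 (μ i) v hv (fun x => hderiv z x) hz1 hz2 hz3
  -- put everything together
  rw [hE1', hE2, hE3]
  have hQ1 : Integrable (fun z => ∫ x, g (i.insertNth x z) i * x ∂γ) Q :=
    hI1'.integral_prod_right
  have hQ2 : Integrable (fun z => ∫ x, g (i.insertNth x z) i ∂γ) Q :=
    hI2.integral_prod_right
  have hQ3 : Integrable (fun z => ∫ x, D (i.insertNth x z) ∂γ) Q :=
    hI3.integral_prod_right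
  calc (∫ z, ∫ x, g (i.insertNth x z) i * x ∂γ ∂Q)
      - (∫ z, ∫ x, g (i.insertNth x z) i ∂γ ∂Q) * μ i
      = ∫ z, ((∫ x, g (i.insertNth x z) i * x ∂γ)
          - (∫ x, g (i.insertNth x z) i ∂γ) * μ i) ∂Q := by
        rw [integral_sub hQ1 (hQ2.mul_const (μ i)), integral_mul_const]
    _ = ∫ z, (v : ℝ) * ∫ x, D (i.insertNth x z) ∂γ ∂Q := integral_congr_ae hae
    _ = (v : ℝ) * ∫ z, ∫ x, D (i.insertNth x z) ∂γ ∂Q := integral_const_mul _ _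

end coord

end SteinAux

/-- Stein's identity: if `Y ~ N(μ, σ²Iₙ)` and `g : ℝⁿ → ℝⁿ` is continuously
differentiable with the relevant integrability, then
`Cov(gᵢ(Y), Yᵢ) = σ² E[∂gᵢ/∂yᵢ]` for each `i`, and consequently
`Σᵢ Cov(gᵢ(Y), Yᵢ)/σ² = E[div g(Y)]`. -/
theorem stein_identity_degrees_of_freedom (n : ℕ) (μ : Fin n → ℝ) (v : NNReal)
    (hv : v ≠ 0)
    (g : (Fin n → ℝ) → (Fin n → ℝ)) (hg : ContDiff ℝ 1 g)
    (P : Measure (Fin n → ℝ))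
    (hP : P = Measure.pi fun i => gaussianReal (μ i) v)
    (hint1 : ∀ i, Integrable (fun y => g y i * y i) P)
    (hint2 : ∀ i, Integrable (fun y => g y i) P)
    (hint3 : ∀ i, Integrable
      (fun y => fderiv ℝ (fun z => g z i) y (Pi.single i (1 : ℝ))) P) :
    (∀ i, ∫ y, g y i * y i ∂P - (∫ y, g y i ∂P) * μ i =
        (v : ℝ) * ∫ y, fderiv ℝ (fun z => g z i) y (Pi.single i (1 : ℝ)) ∂P) ∧
      (∑ i, (∫ y, g y i * y i ∂P - (∫ y, g y i ∂P) * μ i)) / (v : ℝ) =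
        ∫ y, ∑ i, fderiv ℝ (fun z => g z i) y (Pi.single i (1 : ℝ)) ∂P := by
  have hv' : (v : ℝ) ≠ 0 := by exact_mod_cast hv
  have key : ∀ i, ∫ y, g y i * y i ∂P - (∫ y, g y i ∂P) * μ i =
      (v : ℝ) * ∫ y, fderiv ℝ (fun z => g z i) y (Pi.single i (1 : ℝ)) ∂P := by
    intro i
    rcases n with _ | k
    · exact i.elim0
    · subst hP
      exact stein_coord μ v hv g hg i (hint1 i) (hint2 i) (hint3 i)
  refine ⟨key, ?_⟩
  rw [integral_finset_sum Finset.univ (fun i _ => hint3 i)]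
  simp_rw [key]
  rw [← Finset.mul_sum, mul_div_cancel_left₀ _ hv']
end

section
/- Let H ∈ ℝ^{p×q} (p ≥ q) be full rank with distinct singular values, s₁ ≥ ⋯ ≥ s_q with s_k ∈ [0,1] smooth functions of d_k, and H̃ = Σ_k s_k(d_k) d_k u_k v_kᵀ with r̃ = max{k : s_k > 0} = q. Then the divergence Σ_{i,j} ∂H̃_{ij}/∂H_{ij} equals p Σ_{k=1}^q s_k + Σ_{k=1}^q Σ_{l≠k} d_k²(s_k − s_l)/(d_k² − d_l²) + Σ_{k=1}^q d_k s_k'(d_k). -/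
open Matrix Filter

attribute [local instance] Matrix.normedAddCommGroup Matrix.normedSpace

section Aux

variable {X Y Z W : Type*} [NormedAddCommGroup X] [NormedSpace ℝ X]
  [NormedAddCommGroup Y] [NormedSpace ℝ Y]
  [NormedAddCommGroup Z] [NormedSpace ℝ Z]
  [NormedAddCommGroup W] [NormedSpace ℝ W]

/-- upgrade a bilinear map between finite-dimensional spaces to a continuous bilinear map -/
noncomputable def bilinCLM [FiniteDimensional ℝ Y] [FiniteDimensional ℝ Z]
    (b : Y →ₗ[ℝ] Z →ₗ[ℝ] W) : Y →L[ℝ] Z →L[ℝ] W :=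
  LinearMap.toContinuousLinearMap
    { toFun := fun y => LinearMap.toContinuousLinearMap (b y)
      map_add' := fun a c => by ext z; simp
      map_smul' := fun r a => by ext z; simp }

@[simp] lemma bilinCLM_apply [FiniteDimensional ℝ Y] [FiniteDimensional ℝ Z]
    (b : Y →ₗ[ℝ] Z →ₗ[ℝ] W) (y : Y) (z : Z) : bilinCLM b y z = b y z := rfl

theorem hasFDerivAt_bilin (B : Y →L[ℝ] Z →L[ℝ] W) {f : X → Y} {g : X → Z}
    {f' : X →L[ℝ] Y} {g' : X →L[ℝ] Z} {x : X}
    (hf : HasFDerivAt f f' x) (hg : HasFDerivAt g g' x) :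
    HasFDerivAt (fun x => B (f x) (g x))
      ((B (f x)).comp g' + (B.comp f').flip (g x)) x :=
  (B.hasFDerivAt.comp x hf).clm_apply hg

lemma sum_mulVec_comm {m n : ℕ} (M : Matrix (Fin m) (Fin n) ℝ) (a : Fin m → ℝ) (x : Fin n → ℝ) :
    ∑ i, a i * (M *ᵥ x) i = ∑ j, (Mᵀ *ᵥ a) j * x j := by
  simp only [Matrix.mulVec, dotProduct, Matrix.transpose_apply, Finset.mul_sum,
    Finset.sum_mul]
  rw [Finset.sum_comm]
  exact Finset.sum_congr rfl fun j _ => Finset.sum_congr rfl fun i _ => by ring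

lemma dsum_split {m n : ℕ} (a b : ℝ) (f₁ f₂ : Fin m → ℝ) (g₁ g₂ : Fin n → ℝ) :
    ∑ i : Fin m, ∑ j : Fin n, (a * (f₁ i * g₁ j) + b * (f₂ i * g₂ j)) =
      a * ((∑ i, f₁ i) * (∑ j, g₁ j)) + b * ((∑ i, f₂ i) * (∑ j, g₂ j)) := by
  rw [Finset.sum_mul_sum, Finset.sum_mul_sum]
  rw [Finset.mul_sum, Finset.mul_sum, ← Finset.sum_add_distrib]
  refine Finset.sum_congr rfl fun i _ => ?_
  rw [Finset.mul_sum, Finset.mul_sum, ← Finset.sum_add_distrib]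

lemma dsum_one {m n : ℕ} (a : ℝ) (f : Fin m → ℝ) (g : Fin n → ℝ) :
    ∑ i : Fin m, ∑ j : Fin n, a * (f i * g j) = a * ((∑ i, f i) * (∑ j, g j)) := by
  rw [Finset.sum_mul_sum, Finset.mul_sum]
  exact Finset.sum_congr rfl fun i _ => (Finset.mul_sum _ _ _).symm

lemma sum_antisymm {n : ℕ} (g : Fin n → Fin n → ℝ) (hg : ∀ k l, g k l = - g l k) :
    ∑ k : Fin n, ∑ l : Fin n, (if l ≠ k then g k l else 0) = 0 := by
  have h2 : (∑ k : Fin n, ∑ l : Fin n, (if l ≠ k then g k l else 0))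
      = - ∑ k : Fin n, ∑ l : Fin n, (if l ≠ k then g k l else 0) := by
    conv_lhs => rw [Finset.sum_comm]
    rw [← Finset.sum_neg_distrib]
    refine Finset.sum_congr rfl fun k _ => ?_
    rw [← Finset.sum_neg_distrib]
    refine Finset.sum_congr rfl fun l _ => ?_
    by_cases h : k ≠ l
    · rw [if_pos h, if_pos (Ne.symm h)]
      exact hg l k
    · rw [if_neg h, if_neg (fun hh => h (Ne.symm hh)), neg_zero]
  linarith

lemma mul_dsum {m n : ℕ} (c : ℝ) (f : Fin m → Fin n → ℝ) :
    c * (∑ i, ∑ j, f i j) = ∑ i, ∑ j, c * f i j := by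
  rw [Finset.mul_sum]
  exact Finset.sum_congr rfl fun i _ => Finset.mul_sum _ _ _

lemma sum_sum_add3 {m n : ℕ} (f g h : Fin m → Fin n → ℝ) :
    (∑ i, ∑ j, f i j) + ((∑ i, ∑ j, g i j) + (∑ i, ∑ j, h i j))
      = ∑ i, ∑ j, (f i j + (g i j + h i j)) := by
  rw [← Finset.sum_add_distrib, ← Finset.sum_add_distrib]
  exact Finset.sum_congr rfl fun i _ => by
    rw [← Finset.sum_add_distrib, ← Finset.sum_add_distrib]

lemma std_mulVec {m n : ℕ} (i₀ : Fin m) (j₀ : Fin n) (x : Fin n → ℝ) (i : Fin m) :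
    ((Matrix.single i₀ j₀ (1:ℝ)) *ᵥ x) i = if i = i₀ then x j₀ else 0 := by
  simp only [Matrix.mulVec, dotProduct, Matrix.single, Matrix.of_apply, ite_and]
  by_cases h : i = i₀
  · subst h
    simp [eq_comm]
  · simp [Ne.symm h, h]

end Aux
set_option maxHeartbeats 3000000 in
/-- Divergence of a singular-value shrinkage estimator
`H̃ = Σ_k s_k(d_k) d_k u_k v_kᵀ` with all shrinkage factors positive (`r̃ = q`):
if `H₀ = U D Vᵀ` (p ≥ q, full rank, distinct singular values `d₁ > ⋯ > d_q > 0`),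
the `s_k : ℝ → ℝ` are differentiable with `s_q(d_q) > 0`, `s_k(d_k) ≤ 1` and
`s₁(d₁) ≥ ⋯ ≥ s_q(d_q)`, and `(dh k, uh k, vh k)` are differentiable singular triples
near `H₀` agreeing with the SVD at `H₀`, then
`Σ_{i,j} ∂H̃_{ij}/∂H_{ij} = p Σ_k s_k + Σ_k Σ_{l≠k} d_k²(s_k − s_l)/(d_k² − d_l²)
 + Σ_k d_k s_k'(d_k)`. -/
theorem divergence_shrinkage_estimator (p q : ℕ) (hpq : q ≤ p)
    (H₀ : Matrix (Fin p) (Fin q) ℝ) (U : Matrix (Fin p) (Fin q) ℝ)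
    (V : Matrix (Fin q) (Fin q) ℝ) (d : Fin q → ℝ)
    (hsvd : H₀ = U * diagonal d * Vᵀ)
    (hU : Uᵀ * U = 1) (hV : Vᵀ * V = 1) (hV' : V * Vᵀ = 1)
    (hpos : ∀ i, 0 < d i) (hdist : ∀ i j : Fin q, i < j → d j < d i)
    (s : Fin q → ℝ → ℝ) (hs : ∀ k, Differentiable ℝ (s k))
    (hs01 : ∀ k, 0 < s k (d k) ∧ s k (d k) ≤ 1)
    (hsmono : ∀ k l : Fin q, k ≤ l → s l (d l) ≤ s k (d k))
    (dh : Fin q → Matrix (Fin p) (Fin q) ℝ → ℝ)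
    (uh : Fin q → Matrix (Fin p) (Fin q) ℝ → (Fin p → ℝ))
    (vh : Fin q → Matrix (Fin p) (Fin q) ℝ → (Fin q → ℝ))
    (hdh : ∀ k, DifferentiableAt ℝ (dh k) H₀)
    (huh : ∀ k, DifferentiableAt ℝ (uh k) H₀)
    (hvh : ∀ k, DifferentiableAt ℝ (vh k) H₀)
    (htriple : ∀ k, ∀ᶠ H in nhds H₀,
      H *ᵥ vh k H = dh k H • uh k H ∧ Hᵀ *ᵥ uh k H = dh k H • vh k H ∧
        uh k H ⬝ᵥ uh k H = 1 ∧ vh k H ⬝ᵥ vh k H = 1)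
    (hd₀ : ∀ k, dh k H₀ = d k) (hu₀ : ∀ k, uh k H₀ = fun i => U i k)
    (hv₀ : ∀ k, vh k H₀ = fun j => V j k)
    (F : Matrix (Fin p) (Fin q) ℝ → Matrix (Fin p) (Fin q) ℝ)
    (hFdef : ∀ᶠ H in nhds H₀,
      F H = ∑ k, (s k (dh k H) * dh k H) • vecMulVec (uh k H) (vh k H))
    (L : Matrix (Fin p) (Fin q) ℝ →L[ℝ] Matrix (Fin p) (Fin q) ℝ)
    (hF : HasFDerivAt F L H₀) :
    ∑ i : Fin p, ∑ j : Fin q, L (Matrix.single i j (1 : ℝ)) i j =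
      (p : ℝ) * ∑ k, s k (d k) +
        (∑ k : Fin q, ∑ l : Fin q,
          if l ≠ k then d k ^ 2 * (s k (d k) - s l (d l)) / (d k ^ 2 - d l ^ 2) else 0) +
        ∑ k, d k * deriv (s k) (d k) := by
  classical
  -- bilinear continuous maps
  let mulVecB : Matrix (Fin p) (Fin q) ℝ →L[ℝ] (Fin q → ℝ) →L[ℝ] (Fin p → ℝ) :=
    bilinCLM (LinearMap.mk₂ ℝ (fun M x => M *ᵥ x)
      (fun M N x => Matrix.add_mulVec M N x)
      (fun c M x => Matrix.smul_mulVec c M x)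
      (fun M x y => Matrix.mulVec_add M x y)
      (fun c M x => Matrix.mulVec_smul M c x))
  let vmvB : (Fin p → ℝ) →L[ℝ] (Fin q → ℝ) →L[ℝ] Matrix (Fin p) (Fin q) ℝ :=
    bilinCLM (LinearMap.mk₂ ℝ (fun a b => vecMulVec a b)
      (fun a a' b => by ext i j; simp [vecMulVec_apply]; ring)
      (fun c a b => by ext i j; simp [vecMulVec_apply]; ring)
      (fun a b b' => by ext i j; simp [vecMulVec_apply]; ring)
      (fun c a b => by ext i j; simp [vecMulVec_apply]; ring))
  let trB : Matrix (Fin p) (Fin q) ℝ →L[ℝ] Matrix (Fin q) (Fin p) ℝ :=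
    LinearMap.toContinuousLinearMap
      { toFun := fun M => Mᵀ
        map_add' := fun M N => Matrix.transpose_add M N
        map_smul' := fun c M => Matrix.transpose_smul c M }
  let mulVecB' : Matrix (Fin q) (Fin p) ℝ →L[ℝ] (Fin p → ℝ) →L[ℝ] (Fin q → ℝ) :=
    bilinCLM (LinearMap.mk₂ ℝ (fun M x => M *ᵥ x)
      (fun M N x => Matrix.add_mulVec M N x)
      (fun c M x => Matrix.smul_mulVec c M x)
      (fun M x y => Matrix.mulVec_add M x y)
      (fun c M x => Matrix.mulVec_smul M c x))
  let dotB : (Fin p → ℝ) →L[ℝ] (Fin p → ℝ) →L[ℝ] ℝ :=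
    bilinCLM (LinearMap.mk₂ ℝ (fun x y => x ⬝ᵥ y)
      (fun a b c => add_dotProduct a b c)
      (fun r a b => smul_dotProduct r a b)
      (fun a b c => dotProduct_add a b c)
      (fun r a b => dotProduct_smul r a b))
  let dotB' : (Fin q → ℝ) →L[ℝ] (Fin q → ℝ) →L[ℝ] ℝ :=
    bilinCLM (LinearMap.mk₂ ℝ (fun x y => x ⬝ᵥ y)
      (fun a b c => add_dotProduct a b c)
      (fun r a b => smul_dotProduct r a b)
      (fun a b c => dotProduct_add a b c)
      (fun r a b => dotProduct_smul r a b))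
  -- orthonormality
  have hUon : ∀ l m : Fin q, (∑ i, U i l * U i m) = if l = m then (1:ℝ) else 0 := by
    intro l m
    have h := congrFun (congrFun hU l) m
    simpa [Matrix.mul_apply, Matrix.one_apply, Matrix.transpose_apply] using h
  have hVon : ∀ l m : Fin q, (∑ j, V j l * V j m) = if l = m then (1:ℝ) else 0 := by
    intro l m
    have h := congrFun (congrFun hV l) m
    simpa [Matrix.mul_apply, Matrix.one_apply, Matrix.transpose_apply] using h
  have hVrow : ∀ j m : Fin q, (∑ l, V j l * V m l) = if j = m then (1:ℝ) else 0 := by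
    intro j m
    have h := congrFun (congrFun hV' j) m
    simpa [Matrix.mul_apply, Matrix.one_apply, Matrix.transpose_apply] using h
  have hHV : H₀ * V = U * diagonal d := by
    rw [hsvd, Matrix.mul_assoc, hV, Matrix.mul_one]
  have hHv : ∀ (l : Fin q) (i : Fin p), (H₀ *ᵥ fun j => V j l) i = d l * U i l := by
    intro l i
    have h1 : (H₀ *ᵥ fun j => V j l) i = (H₀ * V) i l := by
      simp [Matrix.mulVec, dotProduct, Matrix.mul_apply]
    rw [h1, hHV]
    simp [Matrix.mul_apply, Matrix.diagonal, Matrix.of_apply, mul_ite, mul_zero,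
      Finset.sum_ite_eq, mul_comm]
  have hHtU : H₀ᵀ * U = V * diagonal d := by
    rw [hsvd]
    simp only [Matrix.transpose_mul, Matrix.transpose_transpose, Matrix.diagonal_transpose]
    rw [Matrix.mul_assoc, Matrix.mul_assoc, hU, Matrix.mul_one]
  have hHtu : ∀ (l : Fin q) (j : Fin q), (H₀ᵀ *ᵥ fun i => U i l) j = d l * V j l := by
    intro l j
    have h1 : (H₀ᵀ *ᵥ fun i => U i l) j = (H₀ᵀ * U) j l := by
      simp [Matrix.mulVec, dotProduct, Matrix.mul_apply]
    rw [h1, hHtU]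
    simp [Matrix.mul_apply, Matrix.diagonal, Matrix.of_apply, mul_ite, mul_zero,
      Finset.sum_ite_eq, mul_comm]
  have hΔ : ∀ k l : Fin q, l ≠ k → d k ^ 2 - d l ^ 2 ≠ 0 := by
    intro k l h
    have hne : d k ≠ d l := by
      rcases lt_trichotomy l k with hlt | heq | hgt
      · exact ne_of_lt (hdist l k hlt)
      · exact absurd heq h
      · exact ne_of_gt (hdist k l hgt)
    have hfac : d k ^ 2 - d l ^ 2 = (d k - d l) * (d k + d l) := by ring
    rw [hfac]
    have h1 := hpos k
    have h2 := hpos l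
    exact mul_ne_zero (sub_ne_zero.mpr hne) (by positivity)
  -- derivative equations from the singular triple relations
  have key1 : ∀ (k : Fin q) (E : Matrix (Fin p) (Fin q) ℝ) (i : Fin p),
      (H₀ *ᵥ fderiv ℝ (vh k) H₀ E) i + (E *ᵥ fun j => V j k) i
        = d k * fderiv ℝ (uh k) H₀ E i + fderiv ℝ (dh k) H₀ E * U i k := by
    intro k E i
    have hlhs : HasFDerivAt (fun H : Matrix (Fin p) (Fin q) ℝ => H *ᵥ vh k H)
        (@HAdd.hAdd (Matrix (Fin p) (Fin q) ℝ →L[ℝ] (Fin p → ℝ)) (Matrix (Fin p) (Fin q) ℝ →L[ℝ] (Fin p → ℝ)) (Matrix (Fin p) (Fin q) ℝ →L[ℝ] (Fin p → ℝ)) _ ((mulVecB H₀).comp (fderiv ℝ (vh k) H₀))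
          ((mulVecB.comp (ContinuousLinearMap.id ℝ _)).flip (vh k H₀))) H₀ :=
      hasFDerivAt_bilin mulVecB (hasFDerivAt_id H₀) (hvh k).hasFDerivAt
    have hrhs : HasFDerivAt (fun H => dh k H • uh k H)
        (dh k H₀ • fderiv ℝ (uh k) H₀ + (fderiv ℝ (dh k) H₀).smulRight (uh k H₀)) H₀ :=
      (hdh k).hasFDerivAt.smul (huh k).hasFDerivAt
    have heq := Filter.EventuallyEq.fderiv_eq
      (𝕜 := ℝ) (f := fun H : Matrix (Fin p) (Fin q) ℝ => H *ᵥ vh k H)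
      (f₁ := fun H => dh k H • uh k H) (x := H₀)
      (Filter.EventuallyEq.symm ((htriple k).mono fun H h => h.1))
    rw [hlhs.fderiv, hrhs.fderiv] at heq
    have h3 := congrFun (congrArg (fun T : Matrix (Fin p) (Fin q) ℝ →L[ℝ] (Fin p → ℝ)
      => T E) heq.symm) i
    simp only [ContinuousLinearMap.add_apply, ContinuousLinearMap.comp_apply,
      ContinuousLinearMap.flip_apply, bilinCLM_apply, LinearMap.mk₂_apply,
      ContinuousLinearMap.coe_id', id_eq, ContinuousLinearMap.smulRight_apply,
      ContinuousLinearMap.coe_smul', Pi.add_apply, Pi.smul_apply, smul_eq_mul,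
      hu₀, hv₀, hd₀] at h3
    exact h3
  have key2 : ∀ (k : Fin q) (E : Matrix (Fin p) (Fin q) ℝ) (j : Fin q),
      (H₀ᵀ *ᵥ fderiv ℝ (uh k) H₀ E) j + (Eᵀ *ᵥ fun i => U i k) j
        = d k * fderiv ℝ (vh k) H₀ E j + fderiv ℝ (dh k) H₀ E * V j k := by
    intro k E j
    have htr : HasFDerivAt (fun H : Matrix (Fin p) (Fin q) ℝ => trB H) trB H₀ :=
      trB.hasFDerivAt
    have hlhs : HasFDerivAt (fun H : Matrix (Fin p) (Fin q) ℝ => Hᵀ *ᵥ uh k H)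
        (@HAdd.hAdd (Matrix (Fin p) (Fin q) ℝ →L[ℝ] (Fin q → ℝ)) (Matrix (Fin p) (Fin q) ℝ →L[ℝ] (Fin q → ℝ)) (Matrix (Fin p) (Fin q) ℝ →L[ℝ] (Fin q → ℝ)) _ ((mulVecB' (trB H₀)).comp (fderiv ℝ (uh k) H₀))
          ((mulVecB'.comp trB).flip (uh k H₀))) H₀ := by
      have := hasFDerivAt_bilin mulVecB' htr (huh k).hasFDerivAt
      exact this
    have hrhs : HasFDerivAt (fun H => dh k H • vh k H)
        (dh k H₀ • fderiv ℝ (vh k) H₀ + (fderiv ℝ (dh k) H₀).smulRight (vh k H₀)) H₀ :=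
      (hdh k).hasFDerivAt.smul (hvh k).hasFDerivAt
    have heq := Filter.EventuallyEq.fderiv_eq
      (𝕜 := ℝ) (f := fun H : Matrix (Fin p) (Fin q) ℝ => Hᵀ *ᵥ uh k H)
      (f₁ := fun H => dh k H • vh k H) (x := H₀)
      (Filter.EventuallyEq.symm ((htriple k).mono fun H h => h.2.1))
    rw [hlhs.fderiv, hrhs.fderiv] at heq
    have h3 := congrFun (congrArg (fun T : Matrix (Fin p) (Fin q) ℝ →L[ℝ] (Fin q → ℝ)
      => T E) heq.symm) j
    simp only [ContinuousLinearMap.add_apply, ContinuousLinearMap.comp_apply,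
      ContinuousLinearMap.flip_apply, bilinCLM_apply, LinearMap.mk₂_apply,
      ContinuousLinearMap.smulRight_apply,
      ContinuousLinearMap.coe_smul', Pi.add_apply, Pi.smul_apply, smul_eq_mul,
      hu₀, hv₀, hd₀] at h3
    have htrv : ∀ M : Matrix (Fin p) (Fin q) ℝ, trB M = Mᵀ := fun M => rfl
    change (H₀ᵀ *ᵥ fderiv ℝ (uh k) H₀ E) j + (Eᵀ *ᵥ fun i => U i k) j
      = d k * fderiv ℝ (vh k) H₀ E j + fderiv ℝ (dh k) H₀ E * V j k at h3
    exact h3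
  have key3 : ∀ (k : Fin q) (E : Matrix (Fin p) (Fin q) ℝ),
      (∑ i, U i k * fderiv ℝ (uh k) H₀ E i) = 0 := by
    intro k E
    have hlhs : HasFDerivAt (fun H => uh k H ⬝ᵥ uh k H)
        (@HAdd.hAdd (Matrix (Fin p) (Fin q) ℝ →L[ℝ] ℝ) (Matrix (Fin p) (Fin q) ℝ →L[ℝ] ℝ) (Matrix (Fin p) (Fin q) ℝ →L[ℝ] ℝ) _ ((dotB (uh k H₀)).comp (fderiv ℝ (uh k) H₀))
          ((dotB.comp (fderiv ℝ (uh k) H₀)).flip (uh k H₀))) H₀ :=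
      hasFDerivAt_bilin dotB (huh k).hasFDerivAt (huh k).hasFDerivAt
    have hrhs : HasFDerivAt (fun _ : Matrix (Fin p) (Fin q) ℝ => (1:ℝ))
        (0 : Matrix (Fin p) (Fin q) ℝ →L[ℝ] ℝ) H₀ := hasFDerivAt_const 1 H₀
    have heq := Filter.EventuallyEq.fderiv_eq
      (𝕜 := ℝ) (f := fun H => uh k H ⬝ᵥ uh k H)
      (f₁ := fun _ : Matrix (Fin p) (Fin q) ℝ => (1:ℝ)) (x := H₀)
      (Filter.EventuallyEq.symm ((htriple k).mono fun H h => h.2.2.1))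
    rw [hlhs.fderiv, hrhs.fderiv] at heq
    have h3 := congrArg (fun T : Matrix (Fin p) (Fin q) ℝ →L[ℝ] ℝ => T E) heq.symm
    simp only [ContinuousLinearMap.add_apply, ContinuousLinearMap.comp_apply,
      ContinuousLinearMap.flip_apply, bilinCLM_apply, LinearMap.mk₂_apply,
      ContinuousLinearMap.zero_apply, hu₀, dotProduct] at h3
    have h4 : (∑ i, U i k * fderiv ℝ (uh k) H₀ E i)
        + (∑ i, fderiv ℝ (uh k) H₀ E i * U i k) = 0 := h3
    have h5 : (∑ i, fderiv ℝ (uh k) H₀ E i * U i k)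
        = ∑ i, U i k * fderiv ℝ (uh k) H₀ E i :=
      Finset.sum_congr rfl fun i _ => mul_comm _ _
    rw [h5] at h4
    linarith
  have key4 : ∀ (k : Fin q) (E : Matrix (Fin p) (Fin q) ℝ),
      (∑ m, V m k * fderiv ℝ (vh k) H₀ E m) = 0 := by
    intro k E
    have hlhs : HasFDerivAt (fun H => vh k H ⬝ᵥ vh k H)
        (@HAdd.hAdd (Matrix (Fin p) (Fin q) ℝ →L[ℝ] ℝ) (Matrix (Fin p) (Fin q) ℝ →L[ℝ] ℝ) (Matrix (Fin p) (Fin q) ℝ →L[ℝ] ℝ) _ ((dotB' (vh k H₀)).comp (fderiv ℝ (vh k) H₀))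
          ((dotB'.comp (fderiv ℝ (vh k) H₀)).flip (vh k H₀))) H₀ :=
      hasFDerivAt_bilin dotB' (hvh k).hasFDerivAt (hvh k).hasFDerivAt
    have hrhs : HasFDerivAt (fun _ : Matrix (Fin p) (Fin q) ℝ => (1:ℝ))
        (0 : Matrix (Fin p) (Fin q) ℝ →L[ℝ] ℝ) H₀ := hasFDerivAt_const 1 H₀
    have heq := Filter.EventuallyEq.fderiv_eq
      (𝕜 := ℝ) (f := fun H => vh k H ⬝ᵥ vh k H)
      (f₁ := fun _ : Matrix (Fin p) (Fin q) ℝ => (1:ℝ)) (x := H₀)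
      (Filter.EventuallyEq.symm ((htriple k).mono fun H h => h.2.2.2))
    rw [hlhs.fderiv, hrhs.fderiv] at heq
    have h3 := congrArg (fun T : Matrix (Fin p) (Fin q) ℝ →L[ℝ] ℝ => T E) heq.symm
    simp only [ContinuousLinearMap.add_apply, ContinuousLinearMap.comp_apply,
      ContinuousLinearMap.flip_apply, bilinCLM_apply, LinearMap.mk₂_apply,
      ContinuousLinearMap.zero_apply, hv₀, dotProduct] at h3
    have h4 : (∑ m, V m k * fderiv ℝ (vh k) H₀ E m)
        + (∑ m, fderiv ℝ (vh k) H₀ E m * V m k) = 0 := h3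
    have h5 : (∑ m, fderiv ℝ (vh k) H₀ E m * V m k)
        = ∑ m, V m k * fderiv ℝ (vh k) H₀ E m :=
      Finset.sum_congr rfl fun m _ => mul_comm _ _
    rw [h5] at h4
    linarith
  -- dotted versions
  have e1' : ∀ (k l : Fin q) (E : Matrix (Fin p) (Fin q) ℝ),
      d l * (∑ m, V m l * fderiv ℝ (vh k) H₀ E m)
        + (∑ i, U i l * (E *ᵥ fun j => V j k) i)
      = d k * (∑ i, U i l * fderiv ℝ (uh k) H₀ E i)
        + fderiv ℝ (dh k) H₀ E * (if l = k then 1 else 0) := by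
    intro k l E
    have h0 : ∑ i, U i l * ((H₀ *ᵥ fderiv ℝ (vh k) H₀ E) i + (E *ᵥ fun j => V j k) i)
        = ∑ i, U i l * (d k * fderiv ℝ (uh k) H₀ E i + fderiv ℝ (dh k) H₀ E * U i k) :=
      Finset.sum_congr rfl fun i _ => by rw [key1 k E i]
    have hA1 : ∑ i, U i l * (H₀ *ᵥ fderiv ℝ (vh k) H₀ E) i
        = d l * ∑ m, V m l * fderiv ℝ (vh k) H₀ E m := by
      have h := sum_mulVec_comm H₀ (fun i => U i l) (fderiv ℝ (vh k) H₀ E)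
      rw [h, Finset.mul_sum]
      exact Finset.sum_congr rfl fun m _ => by rw [hHtu l m]; ring
    have hexp1 : ∑ i, U i l * ((H₀ *ᵥ fderiv ℝ (vh k) H₀ E) i + (E *ᵥ fun j => V j k) i)
        = (∑ i, U i l * (H₀ *ᵥ fderiv ℝ (vh k) H₀ E) i)
          + ∑ i, U i l * (E *ᵥ fun j => V j k) i := by
      rw [← Finset.sum_add_distrib]
      exact Finset.sum_congr rfl fun i _ => by ring
    have hexp2 : ∑ i, U i l * (d k * fderiv ℝ (uh k) H₀ E i + fderiv ℝ (dh k) H₀ E * U i k)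
        = d k * (∑ i, U i l * fderiv ℝ (uh k) H₀ E i)
          + fderiv ℝ (dh k) H₀ E * ∑ i, U i l * U i k := by
      rw [Finset.mul_sum, Finset.mul_sum, ← Finset.sum_add_distrib]
      exact Finset.sum_congr rfl fun i _ => by ring
    rw [hexp1, hexp2, hA1] at h0
    rw [hUon l k] at h0
    exact h0
  have e2' : ∀ (k l : Fin q) (E : Matrix (Fin p) (Fin q) ℝ),
      d l * (∑ i, U i l * fderiv ℝ (uh k) H₀ E i)
        + (∑ i, U i k * (E *ᵥ fun j => V j l) i)
      = d k * (∑ m, V m l * fderiv ℝ (vh k) H₀ E m)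
        + fderiv ℝ (dh k) H₀ E * (if l = k then 1 else 0) := by
    intro k l E
    have h0 : ∑ j, V j l * ((H₀ᵀ *ᵥ fderiv ℝ (uh k) H₀ E) j + (Eᵀ *ᵥ fun i => U i k) j)
        = ∑ j, V j l * (d k * fderiv ℝ (vh k) H₀ E j + fderiv ℝ (dh k) H₀ E * V j k) :=
      Finset.sum_congr rfl fun j _ => by rw [key2 k E j]
    have hA1 : ∑ j, V j l * (H₀ᵀ *ᵥ fderiv ℝ (uh k) H₀ E) j
        = d l * ∑ i, U i l * fderiv ℝ (uh k) H₀ E i := by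
      have h := sum_mulVec_comm H₀ᵀ (fun j => V j l) (fderiv ℝ (uh k) H₀ E)
      simp only [Matrix.transpose_transpose] at h
      rw [h, Finset.mul_sum]
      refine Finset.sum_congr rfl fun i _ => ?_
      rw [hHv l i]; ring
    have hA2 : ∑ j, V j l * (Eᵀ *ᵥ fun i => U i k) j
        = ∑ i, U i k * (E *ᵥ fun j => V j l) i := by
      have h := sum_mulVec_comm Eᵀ (fun j => V j l) (fun i => U i k)
      simp only [Matrix.transpose_transpose] at h
      rw [h]
      exact Finset.sum_congr rfl fun i _ => by ring
    have hexp1 : ∑ j, V j l * ((H₀ᵀ *ᵥ fderiv ℝ (uh k) H₀ E) j + (Eᵀ *ᵥ fun i => U i k) j)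
        = (∑ j, V j l * (H₀ᵀ *ᵥ fderiv ℝ (uh k) H₀ E) j)
          + ∑ j, V j l * (Eᵀ *ᵥ fun i => U i k) j := by
      rw [← Finset.sum_add_distrib]
      exact Finset.sum_congr rfl fun j _ => by ring
    have hexp2 : ∑ j, V j l * (d k * fderiv ℝ (vh k) H₀ E j + fderiv ℝ (dh k) H₀ E * V j k)
        = d k * (∑ m, V m l * fderiv ℝ (vh k) H₀ E m)
          + fderiv ℝ (dh k) H₀ E * ∑ j, V j l * V j k := by
      rw [Finset.mul_sum, Finset.mul_sum, ← Finset.sum_add_distrib]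
      exact Finset.sum_congr rfl fun j _ => by ring
    rw [hexp1, hexp2, hA1, hA2] at h0
    rw [hVon l k] at h0
    exact h0
  have hDval : ∀ (k : Fin q) (E : Matrix (Fin p) (Fin q) ℝ),
      fderiv ℝ (dh k) H₀ E = ∑ i, U i k * (E *ᵥ fun j => V j k) i := by
    intro k E
    have h := e1' k k E
    rw [key3, key4] at h
    simpa using h.symm
  have hβval : ∀ (k l : Fin q), l ≠ k → ∀ (E : Matrix (Fin p) (Fin q) ℝ),
      (∑ m, V m l * fderiv ℝ (vh k) H₀ E m)
        = (d k * (∑ i, U i k * (E *ᵥ fun j => V j l) i)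
            + d l * (∑ i, U i l * (E *ᵥ fun j => V j k) i)) / (d k ^ 2 - d l ^ 2) := by
    intro k l hlk E
    have h1 := e1' k l E
    have h2 := e2' k l E
    rw [if_neg hlk, mul_zero] at h1 h2
    rw [eq_div_iff (hΔ k l hlk)]
    linear_combination (-(d k)) * h2 + (-(d l)) * h1
  have hBexp : ∀ (k : Fin q) (E : Matrix (Fin p) (Fin q) ℝ) (j : Fin q),
      fderiv ℝ (vh k) H₀ E j
        = ∑ l, V j l * (∑ m, V m l * fderiv ℝ (vh k) H₀ E m) := by
    intro k E j
    have h1 : fderiv ℝ (vh k) H₀ E j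
        = ∑ m, (if j = m then (1:ℝ) else 0) * fderiv ℝ (vh k) H₀ E m := by
      simp [Finset.sum_ite_eq]
    rw [h1]
    rw [Finset.sum_congr rfl fun m _ => by rw [← hVrow j m]]
    simp only [Finset.sum_mul, Finset.mul_sum]
    rw [Finset.sum_comm]
    exact Finset.sum_congr rfl fun l _ => Finset.sum_congr rfl fun m _ => by ring
  have hH0B : ∀ (k : Fin q) (E : Matrix (Fin p) (Fin q) ℝ) (i : Fin p),
      (H₀ *ᵥ fderiv ℝ (vh k) H₀ E) i
        = ∑ l, d l * U i l * (∑ m, V m l * fderiv ℝ (vh k) H₀ E m) := by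
    intro k E i
    have h1 : (H₀ *ᵥ fderiv ℝ (vh k) H₀ E) i = ∑ m, H₀ i m * fderiv ℝ (vh k) H₀ E m := rfl
    rw [h1]
    calc ∑ m, H₀ i m * fderiv ℝ (vh k) H₀ E m
        = ∑ m, ∑ l, H₀ i m * V m l * (∑ m', V m' l * fderiv ℝ (vh k) H₀ E m') := by
          refine Finset.sum_congr rfl fun m _ => ?_
          rw [hBexp k E m, Finset.mul_sum]
          exact Finset.sum_congr rfl fun l _ => by ring
      _ = ∑ l, ∑ m, H₀ i m * V m l * (∑ m', V m' l * fderiv ℝ (vh k) H₀ E m') :=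
          Finset.sum_comm
      _ = ∑ l, d l * U i l * (∑ m, V m l * fderiv ℝ (vh k) H₀ E m) := by
          refine Finset.sum_congr rfl fun l _ => ?_
          rw [← Finset.sum_mul]
          congr 1
          rw [← hHv l i]; simp [Matrix.mulVec, dotProduct]
  -- the derivative of F
  have hL : ∀ (E : Matrix (Fin p) (Fin q) ℝ) (i : Fin p) (j : Fin q), L E i j =
      ∑ k, ((s k (d k) * d k) * (U i k * fderiv ℝ (vh k) H₀ E j
              + fderiv ℝ (uh k) H₀ E i * V j k)
        + ((deriv (s k) (d k) * d k + s k (d k)) * fderiv ℝ (dh k) H₀ E)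
            * (U i k * V j k)) := by
    have hG : HasFDerivAt
        (fun H => ∑ k, (s k (dh k H) * dh k H) • vecMulVec (uh k H) (vh k H))
        (∑ k, ((s k (d k) * d k) •
            (@HAdd.hAdd (Matrix (Fin p) (Fin q) ℝ →L[ℝ] Matrix (Fin p) (Fin q) ℝ) (Matrix (Fin p) (Fin q) ℝ →L[ℝ] Matrix (Fin p) (Fin q) ℝ) (Matrix (Fin p) (Fin q) ℝ →L[ℝ] Matrix (Fin p) (Fin q) ℝ) _ ((vmvB (uh k H₀)).comp (fderiv ℝ (vh k) H₀))
              ((vmvB.comp (fderiv ℝ (uh k) H₀)).flip (vh k H₀)))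
          + ((deriv (s k) (d k) * d k + s k (d k)) • fderiv ℝ (dh k) H₀).smulRight
              (vecMulVec (uh k H₀) (vh k H₀)))) H₀ := by
      refine HasFDerivAt.fun_sum fun k _ => ?_
      have hck : HasFDerivAt (fun H => s k (dh k H) * dh k H)
          ((deriv (s k) (d k) * d k + s k (d k)) • fderiv ℝ (dh k) H₀) H₀ := by
        have h1 : HasDerivAt (fun t => s k t * t)
            (deriv (s k) (d k) * d k + s k (d k) * 1) (d k) :=
          (((hs k) (d k)).hasDerivAt).mul (hasDerivAt_id (d k))
        rw [mul_one] at h1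
        have h1' : HasDerivAt (fun t => s k t * t)
            (deriv (s k) (d k) * d k + s k (d k)) (dh k H₀) := by rw [hd₀]; exact h1
        exact h1'.comp_hasFDerivAt H₀ (hdh k).hasFDerivAt
      have hvmv : HasFDerivAt (fun H => vecMulVec (uh k H) (vh k H))
          (@HAdd.hAdd (Matrix (Fin p) (Fin q) ℝ →L[ℝ] Matrix (Fin p) (Fin q) ℝ) (Matrix (Fin p) (Fin q) ℝ →L[ℝ] Matrix (Fin p) (Fin q) ℝ) (Matrix (Fin p) (Fin q) ℝ →L[ℝ] Matrix (Fin p) (Fin q) ℝ) _ ((vmvB (uh k H₀)).comp (fderiv ℝ (vh k) H₀))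
            ((vmvB.comp (fderiv ℝ (uh k) H₀)).flip (vh k H₀))) H₀ :=
        hasFDerivAt_bilin vmvB (huh k).hasFDerivAt (hvh k).hasFDerivAt
      have := hck.smul hvmv
      rw [hd₀] at this
      exact this
    have hFd : HasFDerivAt F
        (∑ k, ((s k (d k) * d k) •
            (@HAdd.hAdd (Matrix (Fin p) (Fin q) ℝ →L[ℝ] Matrix (Fin p) (Fin q) ℝ) (Matrix (Fin p) (Fin q) ℝ →L[ℝ] Matrix (Fin p) (Fin q) ℝ) (Matrix (Fin p) (Fin q) ℝ →L[ℝ] Matrix (Fin p) (Fin q) ℝ) _ ((vmvB (uh k H₀)).comp (fderiv ℝ (vh k) H₀))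
              ((vmvB.comp (fderiv ℝ (uh k) H₀)).flip (vh k H₀)))
          + ((deriv (s k) (d k) * d k + s k (d k)) • fderiv ℝ (dh k) H₀).smulRight
              (vecMulVec (uh k H₀) (vh k H₀)))) H₀ :=
      hG.congr_of_eventuallyEq hFdef
    have hLe := hF.unique hFd
    intro E i j
    rw [hLe]
    simp only [ContinuousLinearMap.sum_apply, Matrix.sum_apply]
    refine Finset.sum_congr rfl fun k _ => ?_
    simp only [ContinuousLinearMap.add_apply, ContinuousLinearMap.coe_smul',
      Pi.smul_apply, ContinuousLinearMap.smulRight_apply, ContinuousLinearMap.comp_apply,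
      ContinuousLinearMap.flip_apply, bilinCLM_apply, LinearMap.mk₂_apply,
      Matrix.add_apply, Matrix.smul_apply, Matrix.vecMulVec_apply, smul_eq_mul,
      hu₀, hv₀]
    simp only [vmvB, bilinCLM_apply, LinearMap.mk₂_apply, Matrix.vecMulVec_apply]
    rfl
  -- evaluation on the standard basis
  have hP : ∀ (a b : Fin q) (i₀ : Fin p) (j₀ : Fin q),
      (∑ i, U i a * ((Matrix.single i₀ j₀ (1:ℝ)) *ᵥ fun j => V j b) i) = U i₀ a * V j₀ b := by
    intro a b i₀ j₀
    have h1 : ∀ i : Fin p, U i a * ((Matrix.single i₀ j₀ (1:ℝ)) *ᵥ fun j => V j b) i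
        = if i = i₀ then U i a * V j₀ b else 0 := by
      intro i
      rw [std_mulVec]
      by_cases h : i = i₀ <;> simp [h]
    rw [Finset.sum_congr rfl fun i _ => h1 i]
    simp
  have hDstd : ∀ (k : Fin q) (i : Fin p) (j : Fin q),
      fderiv ℝ (dh k) H₀ (Matrix.single i j 1) = U i k * V j k := by
    intro k i j; rw [hDval]; exact hP k k i j
  have hβstd : ∀ (k l : Fin q), l ≠ k → ∀ (i : Fin p) (j : Fin q),
      (∑ m, V m l * fderiv ℝ (vh k) H₀ (Matrix.single i j 1) m)
        = (d k * (U i k * V j l) + d l * (U i l * V j k)) / (d k ^ 2 - d l ^ 2) := by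
    intro k l hlk i j; rw [hβval k l hlk, hP, hP]
  have hTB : ∀ k : Fin q,
      (∑ i, ∑ j, U i k * fderiv ℝ (vh k) H₀ (Matrix.single i j 1) j)
        = ∑ l, (if l ≠ k then d k / (d k ^ 2 - d l ^ 2) else 0) := by
    intro k
    have hstep : ∀ (i : Fin p) (j : Fin q),
        U i k * fderiv ℝ (vh k) H₀ (Matrix.single i j 1) j
          = ∑ l, U i k * V j l * (∑ m, V m l * fderiv ℝ (vh k) H₀ (Matrix.single i j 1) m) := by
      intro i j
      rw [hBexp k (Matrix.single i j 1) j, Finset.mul_sum]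
      exact Finset.sum_congr rfl fun l _ => by ring
    calc ∑ i, ∑ j, U i k * fderiv ℝ (vh k) H₀ (Matrix.single i j 1) j
        = ∑ i, ∑ j, ∑ l, U i k * V j l
            * (∑ m, V m l * fderiv ℝ (vh k) H₀ (Matrix.single i j 1) m) := by
          exact Finset.sum_congr rfl fun i _ => Finset.sum_congr rfl fun j _ => hstep i j
      _ = ∑ l, ∑ i, ∑ j, U i k * V j l
            * (∑ m, V m l * fderiv ℝ (vh k) H₀ (Matrix.single i j 1) m) := by
          rw [show (∑ i : Fin p, ∑ j : Fin q, ∑ l : Fin q, U i k * V j l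
              * (∑ m, V m l * fderiv ℝ (vh k) H₀ (Matrix.single i j 1) m))
            = ∑ i : Fin p, ∑ l : Fin q, ∑ j : Fin q, U i k * V j l
              * (∑ m, V m l * fderiv ℝ (vh k) H₀ (Matrix.single i j 1) m) from
            Finset.sum_congr rfl fun i _ => Finset.sum_comm]
          exact Finset.sum_comm
      _ = ∑ l, (if l ≠ k then d k / (d k ^ 2 - d l ^ 2) else 0) := by
          refine Finset.sum_congr rfl fun l _ => ?_
          by_cases hlk : l ≠ k
          · rw [if_pos hlk]
            calc ∑ i, ∑ j, U i k * V j l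
                  * (∑ m, V m l * fderiv ℝ (vh k) H₀ (Matrix.single i j 1) m)
                = ∑ i, ∑ j, ((d k / (d k ^ 2 - d l ^ 2)) * ((U i k * U i k) * (V j l * V j l))
                    + (d l / (d k ^ 2 - d l ^ 2)) * ((U i k * U i l) * (V j l * V j k))) := by
                  refine Finset.sum_congr rfl fun i _ => Finset.sum_congr rfl fun j _ => ?_
                  rw [hβstd k l hlk i j]
                  ring
              _ = (d k / (d k ^ 2 - d l ^ 2)) * ((∑ i, U i k * U i k) * (∑ j, V j l * V j l))
                  + (d l / (d k ^ 2 - d l ^ 2)) * ((∑ i, U i k * U i l) * (∑ j, V j l * V j k)) :=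
                  dsum_split _ _ _ _ _ _
              _ = d k / (d k ^ 2 - d l ^ 2) := by
                  rw [hUon k k, hVon l l, hUon k l, hVon l k]
                  simp [hlk, (show ¬ k = l from fun h => hlk h.symm)]
          · rw [if_neg hlk]
            push_neg at hlk
            subst hlk
            simp [key4]
  have hSd : ∀ k : Fin q,
      (∑ i, ∑ j, fderiv ℝ (dh k) H₀ (Matrix.single i j 1) * (U i k * V j k)) = 1 := by
    intro k
    calc ∑ i, ∑ j, fderiv ℝ (dh k) H₀ (Matrix.single i j 1) * (U i k * V j k)
        = ∑ i, ∑ j, (1:ℝ) * ((U i k * U i k) * (V j k * V j k)) := by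
          refine Finset.sum_congr rfl fun i _ => Finset.sum_congr rfl fun j _ => ?_
          rw [hDstd k i j]; ring
      _ = (1:ℝ) * ((∑ i, U i k * U i k) * (∑ j, V j k * V j k)) := dsum_one _ _ _
      _ = 1 := by rw [hUon k k, hVon k k]; simp
  have hTA : ∀ k : Fin q,
      d k * (∑ i, ∑ j, fderiv ℝ (uh k) H₀ (Matrix.single i j 1) i * V j k)
        = (p : ℝ) - 1 + ∑ l, (if l ≠ k then d l ^ 2 / (d k ^ 2 - d l ^ 2) else 0) := by
    intro k
    have hS2 : (∑ i, ∑ j, (H₀ *ᵥ fderiv ℝ (vh k) H₀ (Matrix.single i j 1)) i * V j k)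
        = ∑ l, (if l ≠ k then d l ^ 2 / (d k ^ 2 - d l ^ 2) else 0) := by
      calc ∑ i, ∑ j, (H₀ *ᵥ fderiv ℝ (vh k) H₀ (Matrix.single i j 1)) i * V j k
          = ∑ i, ∑ j, ∑ l, d l * U i l
              * (∑ m, V m l * fderiv ℝ (vh k) H₀ (Matrix.single i j 1) m) * V j k := by
            refine Finset.sum_congr rfl fun i _ => Finset.sum_congr rfl fun j _ => ?_
            rw [hH0B k (Matrix.single i j 1) i, Finset.sum_mul]
        _ = ∑ l, ∑ i, ∑ j, d l * U i l
              * (∑ m, V m l * fderiv ℝ (vh k) H₀ (Matrix.single i j 1) m) * V j k := by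
            rw [show (∑ i : Fin p, ∑ j : Fin q, ∑ l : Fin q, d l * U i l
                * (∑ m, V m l * fderiv ℝ (vh k) H₀ (Matrix.single i j 1) m) * V j k)
              = ∑ i : Fin p, ∑ l : Fin q, ∑ j : Fin q, d l * U i l
                * (∑ m, V m l * fderiv ℝ (vh k) H₀ (Matrix.single i j 1) m) * V j k from
              Finset.sum_congr rfl fun i _ => Finset.sum_comm]
            exact Finset.sum_comm
        _ = ∑ l, (if l ≠ k then d l ^ 2 / (d k ^ 2 - d l ^ 2) else 0) := by
            refine Finset.sum_congr rfl fun l _ => ?_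
            by_cases hlk : l ≠ k
            · rw [if_pos hlk]
              calc ∑ i, ∑ j, d l * U i l
                    * (∑ m, V m l * fderiv ℝ (vh k) H₀ (Matrix.single i j 1) m) * V j k
                  = ∑ i, ∑ j, ((d l * d k / (d k ^ 2 - d l ^ 2))
                        * ((U i l * U i k) * (V j k * V j l))
                      + (d l * d l / (d k ^ 2 - d l ^ 2))
                        * ((U i l * U i l) * (V j k * V j k))) := by
                    refine Finset.sum_congr rfl fun i _ => Finset.sum_congr rfl fun j _ => ?_
                    rw [hβstd k l hlk i j]
                    ring
                _ = (d l * d k / (d k ^ 2 - d l ^ 2))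
                      * ((∑ i, U i l * U i k) * (∑ j, V j k * V j l))
                    + (d l * d l / (d k ^ 2 - d l ^ 2))
                      * ((∑ i, U i l * U i l) * (∑ j, V j k * V j k)) :=
                    dsum_split _ _ _ _ _ _
                _ = d l ^ 2 / (d k ^ 2 - d l ^ 2) := by
                    rw [hUon l k, hVon k l, hUon l l, hVon k k]
                    simp [hlk, (show ¬ k = l from fun h => hlk h.symm)]
                    ring
            · rw [if_neg hlk]
              push_neg at hlk
              subst hlk
              simp [key4]
    have hS1 : (∑ i : Fin p, ∑ j, ((Matrix.single i j 1) *ᵥ fun j' => V j' k) i * V j k)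
        = (p : ℝ) := by
      calc ∑ i : Fin p, ∑ j, ((Matrix.single i j 1) *ᵥ fun j' => V j' k) i * V j k
          = ∑ i : Fin p, ∑ j, V j k * V j k := by
            refine Finset.sum_congr rfl fun i _ => Finset.sum_congr rfl fun j _ => ?_
            rw [std_mulVec]
            simp
        _ = ∑ i : Fin p, (1:ℝ) := by
            refine Finset.sum_congr rfl fun i _ => ?_
            rw [hVon k k]; simp
        _ = (p : ℝ) := by simp
    have hS3 : (∑ i, ∑ j, fderiv ℝ (dh k) H₀ (Matrix.single i j 1) * U i k * V j k)
        = 1 := by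
      rw [show (∑ i, ∑ j, fderiv ℝ (dh k) H₀ (Matrix.single i j 1) * U i k * V j k)
          = ∑ i, ∑ j, fderiv ℝ (dh k) H₀ (Matrix.single i j 1) * (U i k * V j k) from
        Finset.sum_congr rfl fun i _ => Finset.sum_congr rfl fun j _ => by ring]
      exact hSd k
    calc d k * (∑ i, ∑ j, fderiv ℝ (uh k) H₀ (Matrix.single i j 1) i * V j k)
        = ∑ i, ∑ j, ((H₀ *ᵥ fderiv ℝ (vh k) H₀ (Matrix.single i j 1)) i * V j k
            + (((Matrix.single i j 1) *ᵥ fun j' => V j' k) i * V j k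
              + (- (fderiv ℝ (dh k) H₀ (Matrix.single i j 1) * U i k * V j k)))) := by
          rw [mul_dsum]
          refine Finset.sum_congr rfl fun i _ => Finset.sum_congr rfl fun j _ => ?_
          have h := key1 k (Matrix.single i j 1) i
          linear_combination (-(V j k)) * h
      _ = (∑ i, ∑ j, (H₀ *ᵥ fderiv ℝ (vh k) H₀ (Matrix.single i j 1)) i * V j k)
          + ((∑ i : Fin p, ∑ j, ((Matrix.single i j 1) *ᵥ fun j' => V j' k) i * V j k)
            + (∑ i, ∑ j, - (fderiv ℝ (dh k) H₀ (Matrix.single i j 1) * U i k * V j k))) :=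
          (sum_sum_add3 _ _ _).symm
      _ = (p : ℝ) - 1 + ∑ l, (if l ≠ k then d l ^ 2 / (d k ^ 2 - d l ^ 2) else 0) := by
          rw [hS2, hS1]
          have hneg : (∑ i, ∑ j,
                - (fderiv ℝ (dh k) H₀ (Matrix.single i j 1) * U i k * V j k))
              = - ∑ i, ∑ j, fderiv ℝ (dh k) H₀ (Matrix.single i j 1) * U i k * V j k := by
            simp [Finset.sum_neg_distrib]
          rw [hneg, hS3]
          ring
  -- assemble
  have hcomb : ∀ k l : Fin q,
      (if l ≠ k then (s k (d k) * d k ^ 2 + s k (d k) * d l ^ 2) / (d k ^ 2 - d l ^ 2) else 0)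
        = (if l ≠ k then d k ^ 2 * (s k (d k) - s l (d l)) / (d k ^ 2 - d l ^ 2) else 0)
          + (if l ≠ k then (s k (d k) * d l ^ 2 + s l (d l) * d k ^ 2) / (d k ^ 2 - d l ^ 2)
              else 0) := by
    intro k l
    by_cases h : l ≠ k
    · simp only [if_pos h]
      ring
    · simp [h]
  have hanti : (∑ k : Fin q, ∑ l : Fin q,
      if l ≠ k then (s k (d k) * d l ^ 2 + s l (d l) * d k ^ 2) / (d k ^ 2 - d l ^ 2) else 0)
        = 0 := by
    refine sum_antisymm _ fun k l => ?_
    rw [show d l ^ 2 - d k ^ 2 = -(d k ^ 2 - d l ^ 2) by ring, div_neg, neg_neg, add_comm]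
  have hsplit : ∀ k : Fin q,
      s k (d k) * d k * (∑ l, if l ≠ k then d k / (d k ^ 2 - d l ^ 2) else 0)
        + (s k (d k) * ((p:ℝ) - 1 + ∑ l, if l ≠ k then d l ^ 2 / (d k ^ 2 - d l ^ 2) else 0)
          + (deriv (s k) (d k) * d k + s k (d k)))
      = (p : ℝ) * s k (d k) + d k * deriv (s k) (d k)
        + ∑ l, (if l ≠ k then (s k (d k) * d k ^ 2 + s k (d k) * d l ^ 2)
            / (d k ^ 2 - d l ^ 2) else 0) := by
    intro k
    have h1 : s k (d k) * d k * (∑ l, if l ≠ k then d k / (d k ^ 2 - d l ^ 2) else 0)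
        = ∑ l, (if l ≠ k then s k (d k) * d k ^ 2 / (d k ^ 2 - d l ^ 2) else 0) := by
      rw [Finset.mul_sum]
      refine Finset.sum_congr rfl fun l _ => ?_
      by_cases h : l ≠ k
      · simp only [if_pos h]; ring
      · simp [h]
    have h2 : s k (d k) * (∑ l, if l ≠ k then d l ^ 2 / (d k ^ 2 - d l ^ 2) else 0)
        = ∑ l, (if l ≠ k then s k (d k) * d l ^ 2 / (d k ^ 2 - d l ^ 2) else 0) := by
      rw [Finset.mul_sum]
      refine Finset.sum_congr rfl fun l _ => ?_
      by_cases h : l ≠ k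
      · simp only [if_pos h]; ring
      · simp [h]
    have h3 : (∑ l, (if l ≠ k then s k (d k) * d k ^ 2 / (d k ^ 2 - d l ^ 2) else 0))
        + (∑ l, (if l ≠ k then s k (d k) * d l ^ 2 / (d k ^ 2 - d l ^ 2) else 0))
        = ∑ l, (if l ≠ k then (s k (d k) * d k ^ 2 + s k (d k) * d l ^ 2)
            / (d k ^ 2 - d l ^ 2) else 0) := by
      rw [← Finset.sum_add_distrib]
      refine Finset.sum_congr rfl fun l _ => ?_
      by_cases h : l ≠ k
      · simp only [if_pos h]; rw [← add_div]
      · simp [h]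
    linear_combination h1 + h2 + h3
  calc ∑ i : Fin p, ∑ j : Fin q, L (Matrix.single i j (1:ℝ)) i j
      = ∑ k, (s k (d k) * d k
            * (∑ i, ∑ j, U i k * fderiv ℝ (vh k) H₀ (Matrix.single i j 1) j)
          + (s k (d k) * d k
            * (∑ i, ∑ j, fderiv ℝ (uh k) H₀ (Matrix.single i j 1) i * V j k)
          + (deriv (s k) (d k) * d k + s k (d k))
            * (∑ i, ∑ j, fderiv ℝ (dh k) H₀ (Matrix.single i j 1) * (U i k * V j k)))) := by
        rw [Finset.sum_congr rfl fun i (_ : i ∈ Finset.univ) => Finset.sum_congr rfl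
          fun j (_ : j ∈ Finset.univ) => hL (Matrix.single i j 1) i j]
        rw [show (∑ i : Fin p, ∑ j : Fin q, ∑ k : Fin q,
              ((s k (d k) * d k) * (U i k * fderiv ℝ (vh k) H₀ (Matrix.single i j 1) j
                  + fderiv ℝ (uh k) H₀ (Matrix.single i j 1) i * V j k)
              + ((deriv (s k) (d k) * d k + s k (d k))
                  * fderiv ℝ (dh k) H₀ (Matrix.single i j 1)) * (U i k * V j k)))
            = ∑ i : Fin p, ∑ k : Fin q, ∑ j : Fin q,
              ((s k (d k) * d k) * (U i k * fderiv ℝ (vh k) H₀ (Matrix.single i j 1) j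
                  + fderiv ℝ (uh k) H₀ (Matrix.single i j 1) i * V j k)
              + ((deriv (s k) (d k) * d k + s k (d k))
                  * fderiv ℝ (dh k) H₀ (Matrix.single i j 1)) * (U i k * V j k)) from
          Finset.sum_congr rfl fun i _ => Finset.sum_comm]
        rw [show (∑ i : Fin p, ∑ k : Fin q, ∑ j : Fin q,
              ((s k (d k) * d k) * (U i k * fderiv ℝ (vh k) H₀ (Matrix.single i j 1) j
                  + fderiv ℝ (uh k) H₀ (Matrix.single i j 1) i * V j k)
              + ((deriv (s k) (d k) * d k + s k (d k))
                  * fderiv ℝ (dh k) H₀ (Matrix.single i j 1)) * (U i k * V j k)))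
            = ∑ k : Fin q, ∑ i : Fin p, ∑ j : Fin q,
              ((s k (d k) * d k) * (U i k * fderiv ℝ (vh k) H₀ (Matrix.single i j 1) j
                  + fderiv ℝ (uh k) H₀ (Matrix.single i j 1) i * V j k)
              + ((deriv (s k) (d k) * d k + s k (d k))
                  * fderiv ℝ (dh k) H₀ (Matrix.single i j 1)) * (U i k * V j k)) from
          Finset.sum_comm]
        refine Finset.sum_congr rfl fun k _ => ?_
        rw [mul_dsum, mul_dsum, mul_dsum, sum_sum_add3]
        refine Finset.sum_congr rfl fun i _ => Finset.sum_congr rfl fun j _ => ?_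
        ring
    _ = ∑ k, (s k (d k) * d k * (∑ l, if l ≠ k then d k / (d k ^ 2 - d l ^ 2) else 0)
          + (s k (d k) * ((p:ℝ) - 1 + ∑ l, if l ≠ k then d l ^ 2 / (d k ^ 2 - d l ^ 2) else 0)
            + (deriv (s k) (d k) * d k + s k (d k)))) := by
        refine Finset.sum_congr rfl fun k _ => ?_
        rw [hTB k, hSd k]
        have h2 : s k (d k) * d k
            * (∑ i, ∑ j, fderiv ℝ (uh k) H₀ (Matrix.single i j 1) i * V j k)
            = s k (d k)
              * ((p:ℝ) - 1 + ∑ l, if l ≠ k then d l ^ 2 / (d k ^ 2 - d l ^ 2) else 0) := by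
          rw [← hTA k]; ring
        rw [h2]
        ring
    _ = ∑ k, ((p : ℝ) * s k (d k) + d k * deriv (s k) (d k)
          + ∑ l, (if l ≠ k then (s k (d k) * d k ^ 2 + s k (d k) * d l ^ 2)
              / (d k ^ 2 - d l ^ 2) else 0)) :=
        Finset.sum_congr rfl fun k _ => hsplit k
    _ = ∑ k, ((p : ℝ) * s k (d k) + d k * deriv (s k) (d k)
          + ((∑ l, (if l ≠ k then d k ^ 2 * (s k (d k) - s l (d l))
                / (d k ^ 2 - d l ^ 2) else 0))
            + ∑ l, (if l ≠ k then (s k (d k) * d l ^ 2 + s l (d l) * d k ^ 2)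
                / (d k ^ 2 - d l ^ 2) else 0))) := by
        refine Finset.sum_congr rfl fun k _ => ?_
        congr 1
        rw [Finset.sum_congr rfl fun l (_ : l ∈ Finset.univ) => hcomb k l]
        exact Finset.sum_add_distrib
    _ = (p : ℝ) * ∑ k, s k (d k) +
        (∑ k : Fin q, ∑ l : Fin q,
          if l ≠ k then d k ^ 2 * (s k (d k) - s l (d l)) / (d k ^ 2 - d l ^ 2) else 0) +
        ∑ k, d k * deriv (s k) (d k) := by
        rw [Finset.sum_add_distrib, Finset.sum_add_distrib, Finset.sum_add_distrib,
          Finset.mul_sum, hanti]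
        ring
end
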